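/- arXiv:2506.08697 — 6 statements merged into one kernel-verified Lean document; each statement's English description precedes it below -/
import Mathlib

section
/- Let (V, ω, μ) be a connected, locally finite weighted graph with ∑_{y∼x} ω(x,y) ≤ C μ(x) for all x, equipped with a pseudo metric d of finite jump size j, such that all balls B_r(x) are finite. Fix α ∈ [0,1], x₀ ∈ V, and R₀ ≥ 2j. If |Δd(·,x₀)(x)| ≤ C / d(x,x₀)^α for all x ∈ V \ B_{R₀}(x₀), then there exists C' > 0 with |Δ(d(·,x₀)^{1+α})(x)| ≤ C' for all x ∈ V. -/
open scoped BigOperators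

/-- The weighted graph Laplacian on a locally finite graph. -/
noncomputable def lap {V : Type*} (μ : V → ℝ) (ω : V → V → ℝ) (f : V → ℝ) (x : V) : ℝ :=
  (μ x)⁻¹ * ∑ᶠ y, ω x y * (f y - f x)

private lemma abs_rpow_sub_rpow {a b α : ℝ} (ha : 0 ≤ a) (hb : 0 ≤ b)
    (h0 : 0 ≤ α) (h1 : α ≤ 1) : |a ^ α - b ^ α| ≤ |a - b| ^ α := by
  wlog hba : b ≤ a generalizing a b
  · rw [abs_sub_comm, abs_sub_comm a b]; exact this hb ha (le_of_not_ge hba)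
  have key : a ^ α ≤ b ^ α + (a - b) ^ α := by
    have h := NNReal.rpow_add_le_add_rpow b.toNNReal (a - b).toNNReal h0 h1
    have hsum : b.toNNReal + (a - b).toNNReal = a.toNNReal := by
      rw [← Real.toNNReal_add hb (by linarith)]; congr 1; ring
    rw [hsum] at h
    have h' := NNReal.coe_le_coe.2 h
    push_cast [NNReal.coe_rpow, Real.coe_toNNReal _ ha, Real.coe_toNNReal _ hb,
      Real.coe_toNNReal _ (sub_nonneg.2 hba)] at h'
    exact h'
  have h2 : b ^ α ≤ a ^ α := Real.rpow_le_rpow hb hba h0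
  rw [abs_of_nonneg (sub_nonneg.2 h2), abs_of_nonneg (sub_nonneg.2 hba)]
  linarith

private lemma taylor_key {α j r p : ℝ} (h0 : 0 ≤ α) (h1 : α ≤ 1) (hj : 0 < j)
    (hr : 2 * j ≤ r) (hp : |p - r| ≤ j) :
    |p ^ (1 + α) - r ^ (1 + α) - (1 + α) * r ^ α * (p - r)| ≤ 2 * j ^ (1 + α) := by
  have hjr : j ≤ r := by linarith
  have hr0 : 0 < r := by linarith
  obtain ⟨hp1, hp2⟩ := abs_le.1 hp
  have hp0 : j ≤ p := by linarith
  rcases eq_or_ne p r with rfl | hne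
  · simp only [sub_self, mul_zero, sub_zero, abs_zero]
    positivity
  set a := min p r with ha_def
  set b := max p r with hb_def
  have ha : j ≤ a := le_min hp0 hjr
  have hab : a < b := min_lt_max.mpr hne
  have hder : ∀ t ∈ Set.Ioo a b, HasDerivAt (fun x : ℝ => x ^ (1 + α))
      ((1 + α) * t ^ (1 + α - 1)) t :=
    fun t _ => Real.hasDerivAt_rpow_const (Or.inr (by linarith))
  have hcont : ContinuousOn (fun x : ℝ => x ^ (1 + α)) (Set.Icc a b) :=
    fun t _ => (Real.continuousAt_rpow_const t (1 + α) (Or.inr (by linarith))).continuousWithinAt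
  obtain ⟨ξ, hξmem, hξ⟩ :=
    exists_hasDerivAt_eq_slope (fun x : ℝ => x ^ (1 + α)) _ hab hcont hder
  have hξa : a < ξ := hξmem.1
  have hξb : ξ < b := hξmem.2
  have hξpos : 0 < ξ := lt_of_lt_of_le hj (ha.trans hξa.le)
  have hba : b - a ≠ 0 := sub_ne_zero.2 hab.ne'
  rw [eq_div_iff hba] at hξ
  have hexp : (1 : ℝ) + α - 1 = α := by ring
  rw [hexp] at hξ
  have hslope : p ^ (1 + α) - r ^ (1 + α) = (1 + α) * ξ ^ α * (p - r) := by
    rcases le_or_gt p r with hle | hlt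
    · rw [ha_def, hb_def, min_eq_left hle, max_eq_right hle] at hξ
      linear_combination hξ
    · rw [ha_def, hb_def, min_eq_right hlt.le, max_eq_left hlt.le] at hξ
      linear_combination -hξ
  have hmain : p ^ (1 + α) - r ^ (1 + α) - (1 + α) * r ^ α * (p - r)
      = (1 + α) * (ξ ^ α - r ^ α) * (p - r) := by rw [hslope]; ring
  rw [hmain, abs_mul, abs_mul]
  have hξr : |ξ - r| ≤ j := by
    have h1' : a ≤ r := min_le_right _ _
    have h2' : r ≤ b := le_max_right _ _
    have hbaj : b - a ≤ j := by
      have := max_sub_min_eq_abs p r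
      rw [← hb_def, ← ha_def] at this
      rw [this]
      first
      | exact hp
      | (rw [abs_sub_comm]; exact hp)
    rw [abs_le]; constructor <;> linarith
  have hξrα : |ξ ^ α - r ^ α| ≤ j ^ α :=
    (abs_rpow_sub_rpow hξpos.le hr0.le h0 h1).trans
      (Real.rpow_le_rpow (abs_nonneg _) hξr h0)
  have hjα : (0:ℝ) ≤ j ^ α := Real.rpow_nonneg hj.le α
  calc |1 + α| * |ξ ^ α - r ^ α| * |p - r| ≤ 2 * j ^ α * j := by
        have h1a : |1 + α| ≤ 2 := by rw [abs_of_nonneg (by linarith)]; linarith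
        gcongr
    _ = 2 * j ^ (1 + α) := by
        rw [Real.rpow_add hj, Real.rpow_one]; ring

/-- If `|Δ d(·,x₀)(x)| ≤ C / d(x,x₀)^α` outside the ball `B_{R₀}(x₀)`, then
`|Δ (d(·,x₀)^{1+α})|` is bounded on all of `V`. -/
theorem lap_dist_pow_bounded_of_lap_dist {V : Type*}
    (μ : V → ℝ) (ω : V → V → ℝ) (d : V → V → ℝ)
    (hμ : ∀ x, 0 < μ x)
    (hω_symm : ∀ x y, ω x y = ω y x)
    (hω_diag : ∀ x, ω x x = 0)
    (hω_nonneg : ∀ x y, 0 ≤ ω x y)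
    (hloc : ∀ x, {y | ω x y ≠ 0}.Finite)
    (hconn : ∀ x y : V, Relation.ReflTransGen (fun a b => 0 < ω a b) x y)
    (C : ℝ) (hC : 0 < C)
    (hdeg : ∀ x, ∑ᶠ y, ω x y ≤ C * μ x)
    (hd_symm : ∀ x y, d x y = d y x)
    (hd_diag : ∀ x, d x x = 0)
    (hd_nonneg : ∀ x y, 0 ≤ d x y)
    (hd_tri : ∀ x y z, d x y ≤ d x z + d z y)
    (j : ℝ) (hj : 0 < j)
    (hjump : ∀ x y, 0 < ω x y → d x y ≤ j)
    (hballs : ∀ (x : V) (r : ℝ), {y | d y x ≤ r}.Finite)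
    (α : ℝ) (hα : α ∈ Set.Icc (0:ℝ) 1)
    (x₀ : V) (R₀ : ℝ) (hR₀ : 2 * j ≤ R₀)
    (hlapd : ∀ x, R₀ < d x x₀ → |lap μ ω (fun y => d y x₀) x| ≤ C / d x x₀ ^ α) :
    ∃ C' > 0, ∀ x, |lap μ ω (fun y => d y x₀ ^ (1 + α)) x| ≤ C' := by
  obtain ⟨hα0, hα1⟩ := hα
  have hone : (0:ℝ) < 1 + α := by linarith
  set g : V → ℝ := fun y => d y x₀ ^ (1 + α) with hg_def
  set f : V → ℝ := fun y => d y x₀ with hf_def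
  set B : ℝ := (1 + α) * C + 2 * C * j ^ (1 + α) with hB_def
  have hBpos : 0 < B := by
    have : (0:ℝ) < j ^ (1 + α) := Real.rpow_pos_of_pos hj _
    positivity
  set S := (hballs x₀ R₀).toFinset with hS_def
  have hx₀S : x₀ ∈ S := by
    rw [hS_def, Set.Finite.mem_toFinset]
    simp only [Set.mem_setOf_eq, hd_diag]
    linarith
  set M := S.sup' ⟨x₀, hx₀S⟩ (fun x => |lap μ ω g x|) with hM_def
  refine ⟨max M B, lt_max_of_lt_right hBpos, fun x => ?_⟩
  rcases le_or_gt (d x x₀) R₀ with hin | hout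
  · refine le_max_of_le_left ?_
    exact Finset.le_sup' (fun z => |lap μ ω g z|) ((hballs x₀ R₀).mem_toFinset.2 hin)
  · refine le_max_of_le_right ?_
    set r : ℝ := d x x₀ with hr_def
    have hr0 : 0 < r := by linarith
    have hrα : (0:ℝ) < r ^ α := Real.rpow_pos_of_pos hr0 α
    set s := (hloc x).toFinset with hs_def
    have hsupp : ∀ (F : V → ℝ), Function.support (fun y => ω x y * F y) ⊆ ↑s := by
      intro F y hy
      rw [hs_def, Set.Finite.coe_toFinset]
      simp only [Set.mem_setOf_eq]
      intro h
      exact hy (by simp only [h, zero_mul])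
    have hsum_g : ∑ᶠ y, ω x y * (g y - g x) = ∑ y ∈ s, ω x y * (g y - g x) :=
      finsum_eq_sum_of_support_subset _ (hsupp _)
    have hsum_f : ∑ᶠ y, ω x y * (f y - f x) = ∑ y ∈ s, ω x y * (f y - f x) :=
      finsum_eq_sum_of_support_subset _ (hsupp (fun y => f y - f x))
    have hsum_ω : ∑ᶠ y, ω x y = ∑ y ∈ s, ω x y := by
      have := hsupp (fun _ => (1:ℝ))
      simp only [mul_one] at this
      exact finsum_eq_sum_of_support_subset _ this
    set E : V → ℝ := fun y => g y - g x - (1 + α) * r ^ α * (f y - f x) with hE_def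
    have hE : ∀ y ∈ s, |E y| ≤ 2 * j ^ (1 + α) := by
      intro y hy
      rw [hs_def, Set.Finite.mem_toFinset] at hy
      have hωpos : 0 < ω x y := lt_of_le_of_ne (hω_nonneg x y) (Ne.symm hy)
      have hdj : d x y ≤ j := hjump x y hωpos
      have hpj : |f y - r| ≤ j := by
        rw [abs_le]
        constructor
        · have t1 := hd_tri x x₀ y
          simp only [hf_def]
          linarith
        · have t2 := hd_tri y x₀ x
          rw [hd_symm y x] at t2
          simp only [hf_def]
          linarith
      have := taylor_key hα0 hα1 hj (le_trans hR₀ hout.le) hpj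
      simpa [hE_def, hg_def, hf_def, hr_def] using this
    set A : ℝ := ∑ y ∈ s, ω x y * (f y - f x) with hA_def
    set Es : ℝ := ∑ y ∈ s, ω x y * E y with hEs_def
    have hm : 0 < μ x := hμ x
    have hsplit : ∑ y ∈ s, ω x y * (g y - g x) = (1 + α) * r ^ α * A + Es := by
      rw [hA_def, hEs_def, Finset.mul_sum, ← Finset.sum_add_distrib]
      refine Finset.sum_congr rfl fun y _ => ?_
      simp only [hE_def]; ring
    have hlapg : lap μ ω g x = (μ x)⁻¹ * ((1 + α) * r ^ α * A + Es) := by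
      rw [lap, hsum_g, hsplit]
    have hA_bound : |A| ≤ C / r ^ α * μ x := by
      have h1 := hlapd x hout
      have h2 : lap μ ω f x = (μ x)⁻¹ * A := by rw [lap, hsum_f]
      have h3 : |lap μ ω f x| = (μ x)⁻¹ * |A| := by
        rw [h2, abs_mul, abs_of_pos (inv_pos.2 hm)]
      have h4 : (μ x)⁻¹ * |A| ≤ C / r ^ α := by
        rw [← h3]
        simpa [hf_def, hr_def] using h1
      calc |A| = μ x * ((μ x)⁻¹ * |A|) := by field_simp
        _ ≤ μ x * (C / r ^ α) := by gcongr
        _ = C / r ^ α * μ x := by ring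
    have hEs_bound : |Es| ≤ 2 * j ^ (1 + α) * (C * μ x) := by
      calc |Es| ≤ ∑ y ∈ s, |ω x y * E y| := Finset.abs_sum_le_sum_abs _ _
        _ ≤ ∑ y ∈ s, ω x y * (2 * j ^ (1 + α)) := by
            refine Finset.sum_le_sum fun y hy => ?_
            rw [abs_mul, abs_of_nonneg (hω_nonneg x y)]
            exact mul_le_mul_of_nonneg_left (hE y hy) (hω_nonneg x y)
        _ = (∑ y ∈ s, ω x y) * (2 * j ^ (1 + α)) := by rw [← Finset.sum_mul]
        _ ≤ (C * μ x) * (2 * j ^ (1 + α)) := by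
            have hsω : ∑ y ∈ s, ω x y ≤ C * μ x := by rw [← hsum_ω]; exact hdeg x
            have : (0:ℝ) ≤ 2 * j ^ (1 + α) := by positivity
            exact mul_le_mul_of_nonneg_right hsω this
        _ = 2 * j ^ (1 + α) * (C * μ x) := by ring
    calc |lap μ ω g x| = (μ x)⁻¹ * |(1 + α) * r ^ α * A + Es| := by
          rw [hlapg, abs_mul, abs_of_pos (inv_pos.2 hm)]
      _ ≤ (μ x)⁻¹ * ((1 + α) * r ^ α * |A| + |Es|) := by
          refine mul_le_mul_of_nonneg_left ?_ (inv_pos.2 hm).le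
          refine (abs_add_le _ _).trans ?_
          rw [abs_mul, abs_mul, abs_of_pos hone, abs_of_pos hrα]
      _ ≤ (μ x)⁻¹ * ((1 + α) * r ^ α * (C / r ^ α * μ x) + 2 * j ^ (1 + α) * (C * μ x)) := by
          refine mul_le_mul_of_nonneg_left ?_ (inv_pos.2 hm).le
          gcongr
      _ = B := by
          rw [hB_def]
          field_simp
end

section
/- Let (V, ω, μ) be a connected, locally finite weighted graph with ∑_{y∼x} ω(x,y) ≤ C μ(x) for all x, equipped with a pseudo metric d of finite jump size j and finite balls. Fix α ∈ [0,1], x₀ ∈ V, and R₀ ≥ 2j. If |Δ(d(·,x₀)^{1+α})(x)| ≤ C for all x ∈ V, then there exists C' > 0 with |Δd(·,x₀)(x)| ≤ C' / d(x,x₀)^α for all x ∈ V \ B_{R₀}(x₀). -/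
open scoped BigOperators

private lemma bern_aux {α : ℝ} (hα0 : 0 ≤ α) {a b : ℝ} (ha : 0 < a) (hb : 0 ≤ b) :
    a ^ (1+α) + (1+α) * a ^ α * (b - a) ≤ b ^ (1+α) := by
  have hs : -1 ≤ b/a - 1 := by
    have : 0 ≤ b/a := div_nonneg hb ha.le
    linarith
  have hp : (1:ℝ) ≤ 1 + α := by linarith
  have h := one_add_mul_self_le_rpow_one_add hs hp
  rw [show 1 + (b/a - 1) = b/a by ring] at h
  have hA : 0 < a ^ (1+α) := Real.rpow_pos_of_pos ha _
  have hmul : a ^ (1+α) = a * a ^ α := by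
    rw [Real.rpow_add ha, Real.rpow_one]
  calc a ^ (1+α) + (1+α) * a ^ α * (b - a)
      = (1 + (1+α)*(b/a - 1)) * a ^ (1+α) := by
        rw [hmul]; field_simp
    _ ≤ (b/a) ^ (1+α) * a ^ (1+α) := mul_le_mul_of_nonneg_right h hA.le
    _ = b ^ (1+α) := by
        rw [Real.div_rpow hb ha.le, div_mul_cancel₀ _ (ne_of_gt hA)]

private lemma rpow_sub_le_sub_rpow {α : ℝ} (hα0 : 0 ≤ α) (hα1 : α ≤ 1) {a b : ℝ}
    (ha : 0 ≤ a) (hab : a ≤ b) : b ^ α - a ^ α ≤ (b - a) ^ α := by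
  have hba : 0 ≤ b - a := sub_nonneg.2 hab
  have h := NNReal.rpow_add_le_add_rpow (Real.toNNReal a) (Real.toNNReal (b-a)) hα0 hα1
  rw [← Real.toNNReal_add ha hba] at h
  have h2 := NNReal.coe_le_coe.2 h
  push_cast [NNReal.coe_rpow, Real.coe_toNNReal _ (by linarith : (0:ℝ) ≤ a + (b-a)),
    Real.coe_toNNReal _ ha, Real.coe_toNNReal _ hba] at h2
  have : a + (b - a) = b := by ring
  rw [this] at h2
  linarith

private lemma key_taylor {α : ℝ} (hα0 : 0 ≤ α) (hα1 : α ≤ 1) {r t : ℝ}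
    (hr : 0 < r) (ht : 0 < t) :
    |t ^ (1+α) - r ^ (1+α) - (1+α) * r ^ α * (t - r)| ≤ (1+α) * |t - r| ^ (1+α) := by
  have hp : (0:ℝ) ≤ 1 + α := by linarith
  rcases le_total r t with hle | hle
  · -- r ≤ t
    have hlow := bern_aux hα0 hr ht.le
    have hupper : t ^ (1+α) - r ^ (1+α) ≤ (1+α) * t ^ α * (t - r) := by
      have := bern_aux hα0 ht hr.le
      nlinarith [this]
    have hsub : t ^ α - r ^ α ≤ (t - r) ^ α := rpow_sub_le_sub_rpow hα0 hα1 hr.le hle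
    have habs : |t - r| = t - r := abs_of_nonneg (by linarith)
    rw [habs]
    rw [abs_le]
    constructor
    · nlinarith [Real.rpow_nonneg (show (0:ℝ) ≤ t - r by linarith) (1+α)]
    · have h1 : t ^ (1+α) - r ^ (1+α) - (1+α) * r ^ α * (t - r)
          ≤ (1+α) * (t ^ α - r ^ α) * (t - r) := by nlinarith
      have h2 : (1+α) * (t ^ α - r ^ α) * (t - r) ≤ (1+α) * (t - r) ^ α * (t - r) :=
        mul_le_mul_of_nonneg_right (mul_le_mul_of_nonneg_left hsub hp) (by linarith)
      have h3 : (t - r) ^ α * (t - r) = (t - r) ^ (1+α) := by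
        rw [Real.rpow_add' (by linarith) (by positivity : (1:ℝ) + α ≠ 0), Real.rpow_one]
        ring
      calc t ^ (1+α) - r ^ (1+α) - (1+α) * r ^ α * (t - r)
          ≤ (1+α) * (t - r) ^ α * (t - r) := le_trans h1 h2
        _ = (1+α) * ((t - r) ^ α * (t - r)) := by ring
        _ = (1+α) * (t - r) ^ (1+α) := by rw [h3]
  · -- t ≤ r
    have hlow := bern_aux hα0 hr ht.le  -- r^{1+a} + (1+a) r^a (t - r) ≤ t^{1+a}
    have hupper := bern_aux hα0 ht hr.le -- t^{1+a} + (1+a) t^a (r - t) ≤ r^{1+a}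
    have hsub : r ^ α - t ^ α ≤ (r - t) ^ α := rpow_sub_le_sub_rpow hα0 hα1 ht.le hle
    have habs : |t - r| = r - t := by rw [abs_sub_comm]; exact abs_of_nonneg (by linarith)
    rw [habs, abs_le]
    have h3 : (r - t) ^ α * (r - t) = (r - t) ^ (1+α) := by
      rw [Real.rpow_add' (by linarith) (by positivity : (1:ℝ) + α ≠ 0), Real.rpow_one]
      ring
    constructor
    · -- -(1+α)(r-t)^{1+α} ≤ g ; in fact g ≥ 0
      nlinarith [Real.rpow_nonneg (show (0:ℝ) ≤ r - t by linarith) (1+α)]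
    · -- g ≤ (1+α)(r^α - t^α)(r-t) ≤ ...
      have h1 : t ^ (1+α) - r ^ (1+α) - (1+α) * r ^ α * (t - r)
          ≤ (1+α) * (r ^ α - t ^ α) * (r - t) := by nlinarith
      have h2 : (1+α) * (r ^ α - t ^ α) * (r - t) ≤ (1+α) * (r - t) ^ α * (r - t) :=
        mul_le_mul_of_nonneg_right (mul_le_mul_of_nonneg_left hsub hp) (by linarith)
      calc t ^ (1+α) - r ^ (1+α) - (1+α) * r ^ α * (t - r)
          ≤ (1+α) * (r - t) ^ α * (r - t) := le_trans h1 h2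
        _ = (1+α) * ((r - t) ^ α * (r - t)) := by ring
        _ = (1+α) * (r - t) ^ (1+α) := by rw [h3]

/-- If `|Δ (d(·,x₀)^{1+α})|` is bounded on all of `V`, then
`|Δ d(·,x₀)(x)| ≤ C' / d(x,x₀)^α` outside the ball `B_{R₀}(x₀)`. -/
theorem lap_dist_bounded_of_lap_dist_pow {V : Type*}
    (μ : V → ℝ) (ω : V → V → ℝ) (d : V → V → ℝ)
    (hμ : ∀ x, 0 < μ x)
    (hω_symm : ∀ x y, ω x y = ω y x)
    (hω_diag : ∀ x, ω x x = 0)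
    (hω_nonneg : ∀ x y, 0 ≤ ω x y)
    (hloc : ∀ x, {y | ω x y ≠ 0}.Finite)
    (hconn : ∀ x y : V, Relation.ReflTransGen (fun a b => 0 < ω a b) x y)
    (C : ℝ) (hC : 0 < C)
    (hdeg : ∀ x, ∑ᶠ y, ω x y ≤ C * μ x)
    (hd_symm : ∀ x y, d x y = d y x)
    (hd_diag : ∀ x, d x x = 0)
    (hd_nonneg : ∀ x y, 0 ≤ d x y)
    (hd_tri : ∀ x y z, d x y ≤ d x z + d z y)
    (j : ℝ) (hj : 0 < j)
    (hjump : ∀ x y, 0 < ω x y → d x y ≤ j)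
    (hballs : ∀ (x : V) (r : ℝ), {y | d y x ≤ r}.Finite)
    (α : ℝ) (hα : α ∈ Set.Icc (0:ℝ) 1)
    (x₀ : V) (R₀ : ℝ) (hR₀ : 2 * j ≤ R₀)
    (hlapd : ∀ x, |lap μ ω (fun y => d y x₀ ^ (1 + α)) x| ≤ C) :
    ∃ C' > 0, ∀ x, R₀ < d x x₀ → |lap μ ω (fun y => d y x₀) x| ≤ C' / d x x₀ ^ α := by
  obtain ⟨hα0, hα1⟩ := hα
  have hp : (0:ℝ) < 1 + α := by linarith
  have hjp : (0:ℝ) ≤ j ^ (1+α) := Real.rpow_nonneg hj.le _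
  refine ⟨C * (1 + j ^ (1+α)), by positivity, ?_⟩
  intro x hx
  have hrpos : 0 < d x x₀ := by linarith
  have hrapos : 0 < d x x₀ ^ α := Real.rpow_pos_of_pos hrpos α
  set s := (hloc x).toFinset with hs_def
  have hmem : ∀ y, y ∈ s ↔ ω x y ≠ 0 := fun y => (hloc x).mem_toFinset
  have hsum : ∀ f : V → ℝ,
      (∑ᶠ y, ω x y * (f y - f x)) = ∑ y ∈ s, ω x y * (f y - f x) := by
    intro f
    apply finsum_eq_sum_of_support_subset
    intro y hy
    simp only [Function.mem_support] at hy
    rw [Finset.mem_coe, hmem]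
    intro h0
    exact hy (by rw [h0, zero_mul])
  have hdegs : ∑ y ∈ s, ω x y ≤ C * μ x := by
    have : (∑ᶠ y, ω x y) = ∑ y ∈ s, ω x y := by
      apply finsum_eq_sum_of_support_subset
      intro y hy
      rw [Finset.mem_coe, hmem]
      exact hy
    rw [← this]; exact hdeg x
  -- neighbor estimates
  have hnb : ∀ y ∈ s, |d y x₀ - d x x₀| ≤ j ∧ 0 < d y x₀ := by
    intro y hy
    have hωpos : 0 < ω x y := lt_of_le_of_ne (hω_nonneg x y) (Ne.symm ((hmem y).1 hy))
    have hdxy : d x y ≤ j := hjump x y hωpos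
    have h1 : d y x₀ ≤ d y x + d x x₀ := hd_tri y x₀ x
    have h2 : d x x₀ ≤ d x y + d y x₀ := hd_tri x x₀ y
    have h3 : d y x = d x y := hd_symm y x
    constructor
    · rw [abs_le]; constructor <;> linarith
    · linarith
  have hE : ∀ y ∈ s,
      |d y x₀ ^ (1+α) - d x x₀ ^ (1+α) - (1+α) * d x x₀ ^ α * (d y x₀ - d x x₀)|
        ≤ (1+α) * j ^ (1+α) := by
    intro y hy
    obtain ⟨h1, h2⟩ := hnb y hy
    have hk := key_taylor hα0 hα1 hrpos h2
    have hmono : |d y x₀ - d x x₀| ^ (1+α) ≤ j ^ (1+α) :=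
      Real.rpow_le_rpow (abs_nonneg _) h1 hp.le
    calc |d y x₀ ^ (1+α) - d x x₀ ^ (1+α) - (1+α) * d x x₀ ^ α * (d y x₀ - d x x₀)|
        ≤ (1+α) * |d y x₀ - d x x₀| ^ (1+α) := hk
      _ ≤ (1+α) * j ^ (1+α) := mul_le_mul_of_nonneg_left hmono hp.le
  -- the identity
  have hid : lap μ ω (fun y => d y x₀ ^ (1+α)) x
      - (1+α) * d x x₀ ^ α * lap μ ω (fun y => d y x₀) x
      = (μ x)⁻¹ * ∑ y ∈ s, ω x y *
          (d y x₀ ^ (1+α) - d x x₀ ^ (1+α) - (1+α) * d x x₀ ^ α * (d y x₀ - d x x₀)) := by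
    unfold lap
    rw [hsum (fun y => d y x₀ ^ (1+α)), hsum (fun y => d y x₀)]
    have e1 : (∑ y ∈ s, ω x y * (d y x₀ ^ (1+α) - d x x₀ ^ (1+α)))
        - (1+α) * d x x₀ ^ α * ∑ y ∈ s, ω x y * (d y x₀ - d x x₀)
        = ∑ y ∈ s, ω x y *
            (d y x₀ ^ (1+α) - d x x₀ ^ (1+α) - (1+α) * d x x₀ ^ α * (d y x₀ - d x x₀)) := by
      rw [Finset.mul_sum, ← Finset.sum_sub_distrib]
      exact Finset.sum_congr rfl fun y _ => by ring
    rw [← e1]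
    ring
  -- bound the error term
  have hbound : |(μ x)⁻¹ * ∑ y ∈ s, ω x y *
      (d y x₀ ^ (1+α) - d x x₀ ^ (1+α) - (1+α) * d x x₀ ^ α * (d y x₀ - d x x₀))|
      ≤ C * ((1+α) * j ^ (1+α)) := by
    rw [abs_mul, abs_inv, abs_of_pos (hμ x)]
    have h1 : |∑ y ∈ s, ω x y *
        (d y x₀ ^ (1+α) - d x x₀ ^ (1+α) - (1+α) * d x x₀ ^ α * (d y x₀ - d x x₀))|
        ≤ ∑ y ∈ s, ω x y * ((1+α) * j ^ (1+α)) := by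
      refine (Finset.abs_sum_le_sum_abs _ _).trans (Finset.sum_le_sum fun y hy => ?_)
      rw [abs_mul, abs_of_nonneg (hω_nonneg x y)]
      exact mul_le_mul_of_nonneg_left (hE y hy) (hω_nonneg x y)
    have h2 : (∑ y ∈ s, ω x y * ((1+α) * j ^ (1+α)))
        = (∑ y ∈ s, ω x y) * ((1+α) * j ^ (1+α)) := (Finset.sum_mul _ _ _).symm
    have h3 : (∑ y ∈ s, ω x y) * ((1+α) * j ^ (1+α))
        ≤ (C * μ x) * ((1+α) * j ^ (1+α)) :=
      mul_le_mul_of_nonneg_right hdegs (by positivity)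
    calc (μ x)⁻¹ * |∑ y ∈ s, ω x y *
          (d y x₀ ^ (1+α) - d x x₀ ^ (1+α) - (1+α) * d x x₀ ^ α * (d y x₀ - d x x₀))|
        ≤ (μ x)⁻¹ * ((C * μ x) * ((1+α) * j ^ (1+α))) := by
          apply mul_le_mul_of_nonneg_left _ (inv_nonneg.2 (hμ x).le)
          calc _ ≤ ∑ y ∈ s, ω x y * ((1+α) * j ^ (1+α)) := h1
            _ = (∑ y ∈ s, ω x y) * ((1+α) * j ^ (1+α)) := h2
            _ ≤ (C * μ x) * ((1+α) * j ^ (1+α)) := h3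
      _ = C * ((1+α) * j ^ (1+α)) * ((μ x)⁻¹ * μ x) := by ring
      _ = C * ((1+α) * j ^ (1+α)) := by
          rw [inv_mul_cancel₀ (ne_of_gt (hμ x)), mul_one]
  -- put it together
  have hfin : (1+α) * (d x x₀ ^ α * |lap μ ω (fun y => d y x₀) x|)
      ≤ (1+α) * (C * (1 + j ^ (1+α))) := by
    have habs1 : |(1+α) * d x x₀ ^ α * lap μ ω (fun y => d y x₀) x|
        ≤ C + C * ((1+α) * j ^ (1+α)) := by
      have heq : (1+α) * d x x₀ ^ α * lap μ ω (fun y => d y x₀) x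
          = lap μ ω (fun y => d y x₀ ^ (1+α)) x
            - (lap μ ω (fun y => d y x₀ ^ (1+α)) x
              - (1+α) * d x x₀ ^ α * lap μ ω (fun y => d y x₀) x) := by ring
      rw [heq]
      calc _ ≤ |lap μ ω (fun y => d y x₀ ^ (1+α)) x|
            + |lap μ ω (fun y => d y x₀ ^ (1+α)) x
              - (1+α) * d x x₀ ^ α * lap μ ω (fun y => d y x₀) x| := abs_sub _ _
        _ ≤ C + C * ((1+α) * j ^ (1+α)) := by
            refine add_le_add (hlapd x) ?_
            rw [hid]; exact hbound
    have habs2 : |(1+α) * d x x₀ ^ α * lap μ ω (fun y => d y x₀) x|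
        = (1+α) * (d x x₀ ^ α * |lap μ ω (fun y => d y x₀) x|) := by
      rw [abs_mul, abs_mul, abs_of_pos hp, abs_of_pos hrapos, mul_assoc]
    rw [habs2] at habs1
    nlinarith [hjp, hC.le]
  have hfin2 : d x x₀ ^ α * |lap μ ω (fun y => d y x₀) x| ≤ C * (1 + j ^ (1+α)) :=
    le_of_mul_le_mul_left hfin hp
  rw [le_div_iff₀ hrapos]
  linarith [hfin2, mul_comm (|lap μ ω (fun y => d y x₀) x|) (d x x₀ ^ α)]
end

section
/- Let (V, ω, μ) be an infinite weighted graph with ∑_{y∼x} ω(x,y) ≤ C μ(x) for all x, equipped with a pseudo metric d of finite jump size j and finite balls. Let x₀ ∈ V, δ > 0, and u, φ : V → ℝ with (i) ∑_{x∈V} μ(x)|u(x)| e^{-δ d(x,x₀)} < ∞ and (ii) |φ(x)| ≤ C e^{-δ d(x,x₀)} for all x. Then ∑_{x∈V} μ(x) u(x) Δφ(x) = ∑_{x∈V} μ(x) Δu(x) φ(x), and both sums converge absolutely. -/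
open scoped BigOperators

private lemma tsum_eq_finsum_aux {α : Type*} {f : α → ℝ} (hf : (Function.support f).Finite) :
    ∑' x, f x = ∑ᶠ x, f x := by
  rw [finsum_eq_sum f hf, tsum_eq_sum]
  intro b hb
  by_contra h
  exact hb (hf.mem_toFinset.2 h)

private lemma summable_of_finsupp {α : Type*} {f : α → ℝ} (hf : (Function.support f).Finite) :
    Summable f := by
  apply summable_of_ne_finset_zero (s := hf.toFinset)
  intro b hb
  by_contra h
  exact hb (hf.mem_toFinset.2 h)

/-- Integration by parts for a function `u` in the weighted `ℓ¹` space `X_δ`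
against a test function `φ` with exponential decay `|φ(x)| ≤ C e^{-δ d(x,x₀)}`:
both sums converge absolutely and are equal. -/
theorem integration_by_parts_exp_decay {V : Type*} [Infinite V]
    (μ : V → ℝ) (ω : V → V → ℝ) (d : V → V → ℝ)
    (hμ : ∀ x, 0 < μ x)
    (hω_symm : ∀ x y, ω x y = ω y x)
    (hω_diag : ∀ x, ω x x = 0)
    (hω_nonneg : ∀ x y, 0 ≤ ω x y)
    (hloc : ∀ x, {y | ω x y ≠ 0}.Finite)
    (C : ℝ) (hC : 0 < C)
    (hdeg : ∀ x, ∑ᶠ y, ω x y ≤ C * μ x)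
    (hd_symm : ∀ x y, d x y = d y x)
    (hd_diag : ∀ x, d x x = 0)
    (hd_nonneg : ∀ x y, 0 ≤ d x y)
    (hd_tri : ∀ x y z, d x y ≤ d x z + d z y)
    (j : ℝ) (hj : 0 < j)
    (hjump : ∀ x y, 0 < ω x y → d x y ≤ j)
    (hballs : ∀ (x : V) (r : ℝ), {y | d y x ≤ r}.Finite)
    (x₀ : V) (δ : ℝ) (hδ : 0 < δ)
    (u φ : V → ℝ)
    (hu : Summable (fun x => μ x * |u x| * Real.exp (-δ * d x x₀)))
    (hφ : ∀ x, |φ x| ≤ C * Real.exp (-δ * d x x₀)) :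
    Summable (fun x => |μ x * u x * lap μ ω φ x|) ∧
    Summable (fun x => |μ x * lap μ ω u x * φ x|) ∧
    (∑' x, μ x * u x * lap μ ω φ x) = ∑' x, μ x * lap μ ω u x * φ x := by
  classical
  set E : V → ℝ := fun x => Real.exp (-δ * d x x₀) with hEdef
  have hE_pos : ∀ x, 0 < E x := fun x => Real.exp_pos _
  -- exponential compatibility between neighbors
  have hexp : ∀ x y, ω x y ≠ 0 → E x ≤ Real.exp (δ * j) * E y := by
    intro x y hxy
    have hω : 0 < ω x y := (hω_nonneg x y).lt_of_ne (Ne.symm hxy)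
    have h1 : d y x₀ ≤ j + d x x₀ := by
      have ht := hd_tri y x₀ x
      have hj2 := hjump x y hω
      have hs := hd_symm y x
      linarith
    simp only [hEdef, ← Real.exp_add]
    apply Real.exp_le_exp.2
    nlinarith [mul_le_mul_of_nonneg_left h1 hδ.le]
  -- master summable family on V × V
  have hrow_fin : ∀ (x : V) (g : V → ℝ),
      (Function.support fun y => ω x y * g y).Finite := by
    intro x g
    apply ((hloc x).subset)
    intro y hy
    simp only [Function.mem_support] at hy
    intro h
    exact hy (by simp [h])
  have hωsum : ∀ x, Summable (fun y => ω x y) := by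
    intro x
    apply summable_of_finsupp
    exact (hloc x).subset (fun y hy => hy)
  have hωtsum : ∀ x, ∑' y, ω x y ≤ C * μ x := by
    intro x
    rw [tsum_eq_finsum_aux ((hloc x).subset (fun y hy => hy))]
    exact hdeg x
  have hmaster : Summable (fun p : V × V => ω p.1 p.2 * (|u p.1| * E p.1)) := by
    rw [summable_prod_of_nonneg (fun p => by
      exact mul_nonneg (hω_nonneg _ _) (mul_nonneg (abs_nonneg _) (hE_pos _).le))]
    constructor
    · intro x
      exact summable_of_finsupp (hrow_fin x _)
    · apply Summable.of_nonneg_of_le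
        (fun x => tsum_nonneg fun y => mul_nonneg (hω_nonneg _ _)
          (mul_nonneg (abs_nonneg _) (hE_pos _).le))
        (fun x => ?_) (hu.mul_left C)
      show (∑' y, ω x y * (|u x| * E x)) ≤ C * (μ x * |u x| * Real.exp (-δ * d x x₀))
      rw [tsum_mul_right]
      calc (∑' y, ω x y) * (|u x| * E x) ≤ (C * μ x) * (|u x| * E x) := by
            apply mul_le_mul_of_nonneg_right (hωtsum x)
              (mul_nonneg (abs_nonneg _) (hE_pos _).le)
        _ = C * (μ x * |u x| * E x) := by ring
  -- the three building blocks
  set A : V × V → ℝ := fun p => ω p.1 p.2 * u p.1 * φ p.2 with hAdef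
  set B : V × V → ℝ := fun p => ω p.1 p.2 * u p.1 * φ p.1 with hBdef
  have hA_abs : Summable (fun p : V × V => |A p|) := by
    apply Summable.of_nonneg_of_le (fun p => abs_nonneg _) (fun p => ?_)
      (hmaster.mul_left (C * Real.exp (δ * j)))
    simp only [hAdef, abs_mul, abs_of_nonneg (hω_nonneg _ _)]
    rcases eq_or_ne (ω p.1 p.2) 0 with h0 | h0
    · simp only [h0, zero_mul, abs_zero]
      positivity
    · have h1 : |φ p.2| ≤ C * E p.2 := hφ p.2
      have h2 : E p.1 ≤ Real.exp (δ * j) * E p.2 := hexp p.1 p.2 h0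
      have hω := hω_nonneg p.1 p.2
      have := (hE_pos p.1).le
      have := (hE_pos p.2).le
      have hsw : ω p.2 p.1 ≠ 0 := by rwa [← hω_symm]
      have h2' : E p.2 ≤ Real.exp (δ * j) * E p.1 := hexp p.2 p.1 hsw
      calc ω p.1 p.2 * |u p.1| * |φ p.2| ≤ ω p.1 p.2 * |u p.1| * (C * E p.2) := by
            apply mul_le_mul_of_nonneg_left h1 (by positivity)
        _ ≤ ω p.1 p.2 * |u p.1| * (C * (Real.exp (δ * j) * E p.1)) := by
            apply mul_le_mul_of_nonneg_left _ (by positivity)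
            apply mul_le_mul_of_nonneg_left h2' hC.le
        _ = C * Real.exp (δ * j) * (ω p.1 p.2 * (|u p.1| * E p.1)) := by ring
  have hB_abs : Summable (fun p : V × V => |B p|) := by
    apply Summable.of_nonneg_of_le (fun p => abs_nonneg _) (fun p => ?_)
      (hmaster.mul_left C)
    simp only [hBdef, abs_mul, abs_of_nonneg (hω_nonneg _ _)]
    have h1 : |φ p.1| ≤ C * E p.1 := hφ p.1
    have hω := hω_nonneg p.1 p.2
    calc ω p.1 p.2 * |u p.1| * |φ p.1| ≤ ω p.1 p.2 * |u p.1| * (C * E p.1) := by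
          apply mul_le_mul_of_nonneg_left h1 (by positivity)
      _ = C * (ω p.1 p.2 * (|u p.1| * E p.1)) := by ring
  have hA'_abs : Summable (fun p : V × V => |A p.swap|) := by
    exact ((Equiv.prodComm V V).summable_iff.2 hA_abs)
  have hA : Summable A := hA_abs.of_abs
  have hB : Summable B := hB_abs.of_abs
  have hA' : Summable (fun p : V × V => A p.swap) := hA'_abs.of_abs
  -- row representations
  have hleft : ∀ x, μ x * u x * lap μ ω φ x = ∑' y, (A (x, y) - B (x, y)) := by
    intro x
    have hμx : μ x ≠ 0 := (hμ x).ne'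
    have hsupp : (Function.support fun y => ω x y * (φ y - φ x)).Finite := hrow_fin x _
    have : lap μ ω φ x = (μ x)⁻¹ * ∑' y, ω x y * (φ y - φ x) := by
      rw [lap, tsum_eq_finsum_aux hsupp]
    have h2 : μ x * u x * ((μ x)⁻¹ * ∑' y, ω x y * (φ y - φ x))
        = u x * ∑' y, ω x y * (φ y - φ x) := by
      field_simp
    rw [this, h2, ← tsum_mul_left]
    apply tsum_congr
    intro y
    simp only [hAdef, hBdef]
    ring
  have hright : ∀ x, μ x * lap μ ω u x * φ x = ∑' y, (A (x, y).swap - B (x, y)) := by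
    intro x
    have hμx : μ x ≠ 0 := (hμ x).ne'
    have hsupp : (Function.support fun y => ω x y * (u y - u x)).Finite := hrow_fin x _
    have : lap μ ω u x = (μ x)⁻¹ * ∑' y, ω x y * (u y - u x) := by
      rw [lap, tsum_eq_finsum_aux hsupp]
    have h2 : μ x * ((μ x)⁻¹ * ∑' y, ω x y * (u y - u x)) * φ x
        = (∑' y, ω x y * (u y - u x)) * φ x := by
      field_simp
    rw [this, h2, ← tsum_mul_right]
    apply tsum_congr
    intro y
    simp only [hAdef, hBdef, Prod.swap]
    rw [hω_symm y x]
    ring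
  -- summability of rows of product families
  have hAB_abs : Summable (fun p : V × V => |A p - B p|) := by
    apply Summable.of_nonneg_of_le (fun p => abs_nonneg _)
      (fun p => abs_sub _ _) (hA_abs.add hB_abs)
  have hA'B_abs : Summable (fun p : V × V => |A p.swap - B p|) := by
    apply Summable.of_nonneg_of_le (fun p => abs_nonneg _)
      (fun p => abs_sub _ _) (hA'_abs.add hB_abs)
  have key : ∀ (f : V × V → ℝ), Summable (fun p => |f p|) →
      (∀ x, Summable fun y => f (x, y)) →
      Summable (fun x => |∑' y, f (x, y)|) := by
    intro f hf hrow
    have h2 := (summable_prod_of_nonneg (fun p => abs_nonneg (f p))).1 hf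
    apply Summable.of_nonneg_of_le (fun x => abs_nonneg _) (fun x => ?_) h2.2
    have := norm_tsum_le_tsum_norm (f := fun y => f (x, y))
      (by simpa only [Real.norm_eq_abs] using h2.1 x)
    simpa only [Real.norm_eq_abs] using this
  have hrowAB : ∀ x, Summable fun y => A (x, y) - B (x, y) := by
    intro x
    apply summable_of_finsupp
    apply (hloc x).subset
    intro y hy h0
    simp only [Function.mem_support, hAdef, hBdef] at hy
    exact hy (by simp [h0])
  have hrowA'B : ∀ x, Summable fun y => A (x, y).swap - B (x, y) := by
    intro x
    apply summable_of_finsupp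
    apply (hloc x).subset
    intro y hy h0
    simp only [Function.mem_support, hAdef, hBdef, Prod.swap] at hy
    have h0' : ω y x = 0 := by rw [hω_symm y x]; exact h0
    exact hy (by simp [h0, h0'])
  have hS1 : Summable (fun x => |μ x * u x * lap μ ω φ x|) := by
    have := key _ hAB_abs hrowAB
    apply this.congr
    intro x
    rw [hleft x]
  have hS2 : Summable (fun x => |μ x * lap μ ω u x * φ x|) := by
    have := key _ hA'B_abs hrowA'B
    apply this.congr
    intro x
    rw [hright x]
  refine ⟨hS1, hS2, ?_⟩
  have hABsum : Summable (fun p : V × V => A p - B p) := hAB_abs.of_abs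
  have hA'Bsum : Summable (fun p : V × V => A p.swap - B p) := hA'B_abs.of_abs
  calc (∑' x, μ x * u x * lap μ ω φ x)
      = ∑' x, ∑' y, (A (x, y) - B (x, y)) := by
        apply tsum_congr; intro x; exact hleft x
    _ = ∑' p : V × V, (A p - B p) := (Summable.tsum_prod' hABsum hrowAB).symm
    _ = (∑' p, A p) - ∑' p, B p := Summable.tsum_sub hA hB
    _ = (∑' p : V × V, A p.swap) - ∑' p, B p := by
        congr 1
        exact ((Equiv.prodComm V V).tsum_eq A).symm
    _ = ∑' p : V × V, (A p.swap - B p) := (Summable.tsum_sub hA' hB).symm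
    _ = ∑' x, ∑' y, (A (x, y).swap - B (x, y)) := Summable.tsum_prod' hA'Bsum hrowA'B
    _ = ∑' x, μ x * lap μ ω u x * φ x := by
        apply tsum_congr; intro x; exact (hright x).symm
end

section
/- Let (V, ω, μ) be an infinite weighted graph with ∑_{y∼x} ω(x,y) ≤ C μ(x) for all x, a pseudo metric d with finite jump size, and δ > 0, x₀ ∈ V. If u : V → ℝ satisfies ∑_{x∈V} μ(x)|u(x)| e^{-δ d(x,x₀)} < ∞, then ∑_{x∈V} μ(x) |Δu(x)| e^{-δ d(x,x₀)} < ∞. -/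
open scoped BigOperators

/-- If `u` belongs to the weighted `ℓ¹` space `X_δ`, then so does `Δu`. -/
theorem lap_mem_Xdelta {V : Type*} [Infinite V]
    (μ : V → ℝ) (ω : V → V → ℝ) (d : V → V → ℝ)
    (hμ : ∀ x, 0 < μ x)
    (hω_symm : ∀ x y, ω x y = ω y x)
    (hω_diag : ∀ x, ω x x = 0)
    (hω_nonneg : ∀ x y, 0 ≤ ω x y)
    (hloc : ∀ x, {y | ω x y ≠ 0}.Finite)
    (C : ℝ) (hC : 0 < C)
    (hdeg : ∀ x, ∑ᶠ y, ω x y ≤ C * μ x)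
    (hd_symm : ∀ x y, d x y = d y x)
    (hd_diag : ∀ x, d x x = 0)
    (hd_nonneg : ∀ x y, 0 ≤ d x y)
    (hd_tri : ∀ x y z, d x y ≤ d x z + d z y)
    (j : ℝ) (hj : 0 < j)
    (hjump : ∀ x y, 0 < ω x y → d x y ≤ j)
    (x₀ : V) (δ : ℝ) (hδ : 0 < δ)
    (u : V → ℝ)
    (hu : Summable (fun x => μ x * |u x| * Real.exp (-δ * d x x₀))) :
    Summable (fun x => μ x * |lap μ ω u x| * Real.exp (-δ * d x x₀)) := by
  classical
  set E : V → ℝ := fun x => Real.exp (-δ * d x x₀) with hE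
  have hEpos : ∀ x, 0 < E x := fun x => Real.exp_pos _
  set S : V → Finset V := fun x => (hloc x).toFinset with hS
  have hSmem : ∀ x y, y ∈ S x ↔ ω x y ≠ 0 := by
    intro x y; simp [hS, Set.Finite.mem_toFinset]
  -- finsum as finset sum
  have hfin : ∀ x (g : V → ℝ), (∑ᶠ y, ω x y * g y) = ∑ y ∈ S x, ω x y * g y := by
    intro x g
    apply finsum_eq_sum_of_support_subset
    intro y hy
    simp only [Function.mem_support] at hy
    rw [Finset.mem_coe, hSmem]
    intro h; apply hy; rw [h]; ring
  -- degree bound for any finset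
  have hdeg' : ∀ (y : V) (s : Finset V), ∑ x ∈ s, ω y x ≤ C * μ y := by
    intro y s
    refine le_trans ?_ (hdeg y)
    have h1 : (∑ᶠ x, ω y x) = ∑ x ∈ S y, ω y x := by
      simpa using hfin y (fun _ => 1)
    rw [h1]
    have h2 : ∑ x ∈ s, ω y x ≤ ∑ x ∈ s ∪ S y, ω y x :=
      Finset.sum_le_sum_of_subset_of_nonneg Finset.subset_union_left
        (fun i _ _ => hω_nonneg y i)
    refine h2.trans (le_of_eq ?_)
    refine (Finset.sum_subset Finset.subset_union_right ?_).symm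
    intro z _ hz
    by_contra h
    exact hz ((hSmem y z).2 h)
  -- pointwise bound: μ x * |lap u x| * E x ≤ F x + G x
  set F : V → ℝ := fun x => (∑ y ∈ S x, ω x y * |u y|) * E x with hF
  set G : V → ℝ := fun x => C * (μ x * |u x| * E x) with hG
  have hbound : ∀ x, μ x * |lap μ ω u x| * E x ≤ F x + G x := by
    intro x
    have hμx := hμ x
    have h1 : μ x * |lap μ ω u x| = |∑ y ∈ S x, ω x y * (u y - u x)| := by
      rw [lap, hfin x (fun y => u y - u x), abs_mul, abs_inv, abs_of_pos hμx]
      field_simp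
    have h2 : |∑ y ∈ S x, ω x y * (u y - u x)| ≤
        ∑ y ∈ S x, ω x y * |u y| + (∑ y ∈ S x, ω x y) * |u x| := by
      refine (Finset.abs_sum_le_sum_abs _ _).trans ?_
      rw [Finset.sum_mul, ← Finset.sum_add_distrib]
      apply Finset.sum_le_sum
      intro y _
      rw [abs_mul, abs_of_nonneg (hω_nonneg x y)]
      have := abs_sub (u y) (u x)
      nlinarith [hω_nonneg x y, abs_sub_abs_le_abs_sub (u y) (u x),
        abs_sub (u y) (u x)]
    have h3 : (∑ y ∈ S x, ω x y) * |u x| ≤ C * μ x * |u x| :=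
      mul_le_mul_of_nonneg_right (hdeg' x (S x)) (abs_nonneg _)
    calc μ x * |lap μ ω u x| * E x
        ≤ (∑ y ∈ S x, ω x y * |u y| + C * μ x * |u x|) * E x := by
          rw [h1]
          exact mul_le_mul_of_nonneg_right (h2.trans (by linarith)) (hEpos x).le
      _ = F x + G x := by rw [hF, hG]; ring
  -- G is summable
  have hGsum : Summable G := hu.mul_left C
  -- F is summable via bounded partial sums
  have hFnonneg : ∀ x, 0 ≤ F x := by
    intro x
    apply mul_nonneg _ (hEpos x).le
    exact Finset.sum_nonneg fun y _ => mul_nonneg (hω_nonneg x y) (abs_nonneg _)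
  have hFsum : Summable F := by
    apply summable_of_sum_le hFnonneg
      (c := Real.exp (δ * j) * C * ∑' y, μ y * |u y| * E y)
    intro s
    set T : Finset V := s.biUnion S with hT
    have step1 : ∑ x ∈ s, F x ≤ ∑ x ∈ s, ∑ y ∈ T, ω x y * |u y| * E x := by
      apply Finset.sum_le_sum
      intro x hx
      rw [hF]
      simp only
      rw [Finset.sum_mul]
      apply le_of_eq
      apply Finset.sum_subset
      · exact fun y hy => Finset.mem_biUnion.2 ⟨x, hx, hy⟩
      · intro y _ hy
        have : ω x y = 0 := by
          by_contra h; exact hy ((hSmem x y).2 h)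
        rw [this]; ring
    have step2 : ∑ x ∈ s, ∑ y ∈ T, ω x y * |u y| * E x ≤
        ∑ y ∈ T, Real.exp (δ * j) * C * (μ y * |u y| * E y) := by
      rw [Finset.sum_comm]
      apply Finset.sum_le_sum
      intro y _
      have key : ∀ x ∈ s, ω x y * |u y| * E x ≤
          ω y x * |u y| * (Real.exp (δ * j) * E y) := by
        intro x _
        rcases eq_or_lt_of_le (hω_nonneg x y) with h | h
        · have h' : ω y x = 0 := by rw [← hω_symm x y]; exact h.symm
          rw [← h, h']; simp
        · rw [hω_symm x y] at h ⊢
          have hdxy : d x x₀ ≥ d y x₀ - j := by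
            have := hd_tri y x₀ x
            have := hjump y x (h)
            have := hd_symm y x
            linarith
          have hEle : E x ≤ Real.exp (δ * j) * E y := by
            rw [hE]
            simp only
            rw [← Real.exp_add]
            apply Real.exp_le_exp.2
            nlinarith
          have h0 : 0 ≤ ω y x * |u y| := mul_nonneg h.le (abs_nonneg _)
          exact mul_le_mul_of_nonneg_left hEle h0
      refine (Finset.sum_le_sum key).trans ?_
      have : ∑ x ∈ s, ω y x * |u y| * (Real.exp (δ * j) * E y)
          = (∑ x ∈ s, ω y x) * (|u y| * (Real.exp (δ * j) * E y)) := by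
        rw [Finset.sum_mul]; apply Finset.sum_congr rfl; intros; ring
      rw [this]
      have h5 : (∑ x ∈ s, ω y x) * (|u y| * (Real.exp (δ * j) * E y)) ≤
          (C * μ y) * (|u y| * (Real.exp (δ * j) * E y)) :=
        mul_le_mul_of_nonneg_right (hdeg' y s)
          (mul_nonneg (abs_nonneg (u y)) (mul_nonneg (Real.exp_pos _).le (hEpos y).le))
      refine h5.trans (le_of_eq ?_)
      ring
    have step3 : ∑ y ∈ T, Real.exp (δ * j) * C * (μ y * |u y| * E y) ≤
        Real.exp (δ * j) * C * ∑' y, μ y * |u y| * E y := by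
      rw [← Finset.mul_sum]
      apply mul_le_mul_of_nonneg_left _ (mul_nonneg (Real.exp_pos _).le hC.le)
      exact Summable.sum_le_tsum T (fun y _ =>
        mul_nonneg (mul_nonneg (hμ y).le (abs_nonneg _)) (hEpos y).le) hu
    linarith
  -- conclude
  show Summable fun x => μ x * |lap μ ω u x| * E x
  apply Summable.of_nonneg_of_le _ hbound (hFsum.add hGsum)
  intro x
  exact mul_nonneg (mul_nonneg (hμ x).le (abs_nonneg _)) (hEpos x).le
end

section
/- On ℤ^N with unit edge weights and μ ≡ 2N, equipped with the Euclidean distance d, there exists C > 0 such that |Δ d(·,x₀)(x)| ≤ C / d(x,x₀) for every x with d(x,x₀) > 0. -/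
open scoped BigOperators

/-- Edge weights of the integer lattice `ℤ^N`: weight `1` between nearest
neighbours, `0` otherwise. -/
noncomputable def latticeWeight (N : ℕ) (x y : Fin N → ℤ) : ℝ :=
  if (∑ i, |x i - y i|) = 1 then 1 else 0

/-- The graph Laplacian on `ℤ^N` with node measure `μ ≡ 2N`. -/
noncomputable def latticeLap (N : ℕ) (f : (Fin N → ℤ) → ℝ) (x : Fin N → ℤ) : ℝ :=
  ((2 * N : ℝ))⁻¹ * ∑ᶠ y, latticeWeight N x y * (f y - f x)

/-- The Euclidean distance between two points of `ℤ^N`. -/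
noncomputable def latticeDist (N : ℕ) (x y : Fin N → ℤ) : ℝ :=
  Real.sqrt (∑ i, ((x i - y i : ℤ) : ℝ) ^ 2)

lemma pair_bound (s s1 s2 a : ℝ) (hs : 0 < s) (hs1 : 0 ≤ s1) (hs2 : 0 ≤ s2)
    (h1 : s1^2 = s^2 + 2*a + 1) (h2 : s2^2 = s^2 - 2*a + 1) (ha : a^2 ≤ s^2) :
    0 ≤ (s1 - s) + (s2 - s) ∧ (s1 - s) + (s2 - s) ≤ 2/s := by
  have hp : s^2 - 1 ≤ s1 * s2 := by
    nlinarith [mul_nonneg hs1 hs2, sq_nonneg (s1*s2 - (s^2-1)), sq_nonneg (s1*s2 + (s^2-1))]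
  have hq : s1 * s2 ≤ s^2 + 1 := by
    nlinarith [mul_nonneg hs1 hs2, sq_nonneg (s1*s2 - (s^2+1)), sq_nonneg (s1*s2 + (s^2+1))]
  constructor
  · nlinarith [add_nonneg hs1 hs2, mul_pos hs hs]
  · rw [le_div_iff₀ hs]
    nlinarith [sq_nonneg (s1 + s2 - 2*s)]

lemma neighbor_char {N : ℕ} (x y : Fin N → ℤ) (h : (∑ i, |x i - y i|) = 1) :
    ∃ i : Fin N, ∃ e : ℤ, (e = 1 ∨ e = -1) ∧ y = Function.update x i (x i + e) := by
  obtain ⟨i, -, hi⟩ := Finset.exists_ne_zero_of_sum_ne_zero (by rw [h]; norm_num :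
    (∑ i, |x i - y i|) ≠ 0)
  have hsum : |x i - y i| + ∑ j ∈ Finset.univ.erase i, |x j - y j| = 1 := by
    rw [Finset.add_sum_erase _ (fun j => |x j - y j|) (Finset.mem_univ i)]; exact h
  have h1le : 1 ≤ |x i - y i| := Int.one_le_abs (fun hc => hi (by rw [hc]; simp))
  have hrest : ∑ j ∈ Finset.univ.erase i, |x j - y j| = 0 := by
    have : (0:ℤ) ≤ ∑ j ∈ Finset.univ.erase i, |x j - y j| :=
      Finset.sum_nonneg fun j _ => abs_nonneg _
    omega
  have hzero : ∀ j ∈ Finset.univ.erase i, |x j - y j| = 0 := by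
    intro j hj
    exact (Finset.sum_eq_zero_iff_of_nonneg fun k _ => abs_nonneg _).mp hrest j hj
  have habs : |x i - y i| = 1 := by omega
  refine ⟨i, y i - x i, ?_, ?_⟩
  · have : |y i - x i| = 1 := by rw [abs_sub_comm]; exact habs
    rcases (abs_eq (by norm_num : (0:ℤ) ≤ 1)).mp this with h' | h'
    · exact Or.inl h'
    · exact Or.inr h'
  · funext j
    by_cases hji : j = i
    · subst hji; rw [Function.update_self]; ring
    · rw [Function.update_of_ne hji]
      have := abs_eq_zero.mp (hzero j (Finset.mem_erase.mpr ⟨hji, Finset.mem_univ j⟩))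
      omega


/-- On `ℤ^N`, the Laplacian of the Euclidean distance from `x₀` satisfies
`|Δ d(·,x₀)(x)| ≤ C / d(x,x₀)` wherever `d(x,x₀) > 0`. -/
theorem latticeLap_dist_decay (N : ℕ) (hN : 0 < N) :
    ∃ C > 0, ∀ (x₀ x : Fin N → ℤ), 0 < latticeDist N x x₀ →
      |latticeLap N (fun y => latticeDist N y x₀) x| ≤ C / latticeDist N x x₀ := by
  refine ⟨1, one_pos, fun x₀ x hd => ?_⟩
  set s : ℝ := latticeDist N x x₀ with hs_def
  set f : (Fin N → ℤ) → ℝ := fun y => latticeDist N y x₀ with hf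
  set a : Fin N → ℝ := fun i => ((x i - x₀ i : ℤ) : ℝ) with ha_def
  set Q : ℝ := ∑ i, ((x i - x₀ i : ℤ) : ℝ)^2 with hQ
  have hQ0 : 0 ≤ Q := Finset.sum_nonneg fun i _ => sq_nonneg _
  have hsQ : s^2 = Q := Real.sq_sqrt hQ0
  have haQ : ∀ i : Fin N, (a i)^2 ≤ Q :=
    fun i => Finset.single_le_sum (fun j (_ : j ∈ Finset.univ) => sq_nonneg
      (((x j - x₀ j : ℤ) : ℝ))) (Finset.mem_univ i)
  -- nonnegativity of the shifted quantities
  have hQe : ∀ (i : Fin N) (e : ℝ), e = 1 ∨ e = -1 → 0 ≤ Q + 2 * a i * e + 1 := by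
    intro i e he
    rcases he with rfl | rfl <;> nlinarith [haQ i, sq_nonneg (a i + 1), sq_nonneg (a i - 1)]
  -- distance to a neighbour
  have hnbrQ : ∀ (i : Fin N) (e : ℤ), e = 1 ∨ e = -1 →
      f (Function.update x i (x i + e)) = Real.sqrt (Q + 2 * a i * (e : ℝ) + 1) := by
    intro i e he
    have key : ∑ j, (Function.update x i (x i + e) j - x₀ j)^2
        = (∑ j, (x j - x₀ j)^2) + 2*(x i - x₀ i)*e + 1 := by
      rw [← Finset.add_sum_erase _ (fun j => (Function.update x i (x i + e) j - x₀ j)^2)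
        (Finset.mem_univ i),
        ← Finset.add_sum_erase _ (fun j => (x j - x₀ j)^2) (Finset.mem_univ i)]
      have herase : ∑ j ∈ Finset.univ.erase i, (Function.update x i (x i + e) j - x₀ j)^2
          = ∑ j ∈ Finset.univ.erase i, (x j - x₀ j)^2 :=
        Finset.sum_congr rfl fun j hj => by
          rw [Function.update_of_ne (Finset.mem_erase.mp hj).1]
      rw [herase, Function.update_self]
      rcases he with rfl | rfl <;> ring
    show latticeDist N (Function.update x i (x i + e)) x₀ = _
    rw [latticeDist]
    congr 1
    rw [hQ, ha_def]
    push_cast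
    exact_mod_cast congrArg (fun z : ℤ => (z : ℝ)) key
  -- weight of a neighbour
  have hw : ∀ (i : Fin N) (e : ℤ), e = 1 ∨ e = -1 →
      latticeWeight N x (Function.update x i (x i + e)) = 1 := by
    intro i e he
    have hsum1 : ∑ j, |x j - Function.update x i (x i + e) j| = 1 := by
      rw [← Finset.add_sum_erase _ (fun j => |x j - Function.update x i (x i + e) j|)
        (Finset.mem_univ i),
        Finset.sum_eq_zero (fun j hj => by
          rw [Function.update_of_ne (Finset.mem_erase.mp hj).1]; simp),
        Function.update_self]
      rcases he with rfl | rfl <;> simp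
    rw [latticeWeight, if_pos hsum1]
  -- the finite neighbour set
  set P : Finset (Fin N × ℤ) := (Finset.univ : Finset (Fin N)) ×ˢ ({1, -1} : Finset ℤ)
    with hP
  set T : Finset (Fin N → ℤ) := P.image (fun p => Function.update x p.1 (x p.1 + p.2))
    with hT
  have hsupp : (Function.support fun y => latticeWeight N x y * (f y - f x)) ⊆ ↑T := by
    intro y hy
    have hw0 : latticeWeight N x y ≠ 0 := by
      intro h0
      exact hy (by simp [h0])
    have hcond : (∑ i, |x i - y i|) = 1 := by
      by_contra hc
      exact hw0 (if_neg hc)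
    obtain ⟨i, e, he, rfl⟩ := neighbor_char x y hcond
    refine Finset.mem_coe.mpr (Finset.mem_image.mpr ⟨(i, e), ?_, rfl⟩)
    rw [hP, Finset.mem_product]
    rcases he with rfl | rfl <;> simp
  have hinjP : ∀ p ∈ P, ∀ q ∈ P,
      Function.update x p.1 (x p.1 + p.2) = Function.update x q.1 (x q.1 + q.2) → p = q := by
    rintro ⟨i, e⟩ hi ⟨j, e'⟩ hj hEq
    have hei : e = 1 ∨ e = -1 := by
      have := (Finset.mem_product.mp hi).2; simpa using this
    by_cases hij : i = j
    · subst hij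
      have := congrFun hEq i
      rw [Function.update_self, Function.update_self] at this
      exact Prod.ext rfl (add_left_cancel this)
    · have := congrFun hEq i
      rw [Function.update_self, Function.update_of_ne hij] at this
      have h0 : e = 0 := by linarith
      exfalso
      rcases hei with rfl | rfl <;> norm_num at h0
  -- compute the finsum
  have hfin : (∑ᶠ y, latticeWeight N x y * (f y - f x))
      = ∑ i, ((Real.sqrt (Q + 2 * a i + 1) - s) + (Real.sqrt (Q - 2 * a i + 1) - s)) := by
    rw [finsum_eq_sum_of_support_subset _ hsupp, hT, Finset.sum_image hinjP, hP,
      Finset.sum_product]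
    refine Finset.sum_congr rfl fun i _ => ?_
    rw [Finset.sum_pair (by norm_num : (1:ℤ) ≠ -1)]
    rw [hw i 1 (Or.inl rfl), hw i (-1) (Or.inr rfl),
      hnbrQ i 1 (Or.inl rfl), hnbrQ i (-1) (Or.inr rfl)]
    have hfx : f x = s := rfl
    rw [hfx]
    push_cast
    ring_nf
  -- bound each pair
  have hpair : ∀ i : Fin N,
      0 ≤ ((Real.sqrt (Q + 2 * a i + 1) - s) + (Real.sqrt (Q - 2 * a i + 1) - s)) ∧
      ((Real.sqrt (Q + 2 * a i + 1) - s) + (Real.sqrt (Q - 2 * a i + 1) - s)) ≤ 2 / s := by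
    intro i
    have h1 : (Real.sqrt (Q + 2 * a i + 1))^2 = s^2 + 2 * a i + 1 := by
      rw [Real.sq_sqrt (by have := hQe i 1 (Or.inl rfl); linarith), hsQ]
    have h2 : (Real.sqrt (Q - 2 * a i + 1))^2 = s^2 - 2 * a i + 1 := by
      rw [Real.sq_sqrt (by have := hQe i (-1) (Or.inr rfl); linarith), hsQ]
    exact pair_bound s _ _ (a i) hd (Real.sqrt_nonneg _) (Real.sqrt_nonneg _) h1 h2
      (by rw [hsQ]; exact haQ i)
  set S : ℝ := ∑ i, ((Real.sqrt (Q + 2 * a i + 1) - s) + (Real.sqrt (Q - 2 * a i + 1) - s))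
    with hS
  have hS0 : 0 ≤ S := Finset.sum_nonneg fun i _ => (hpair i).1
  have hSle : S ≤ N * (2 / s) := by
    rw [hS]
    calc ∑ i : Fin N, ((Real.sqrt (Q + 2 * a i + 1) - s) + (Real.sqrt (Q - 2 * a i + 1) - s))
        ≤ ∑ _i : Fin N, 2 / s := Finset.sum_le_sum fun i _ => (hpair i).2
      _ = N * (2 / s) := by rw [Finset.sum_const, Finset.card_univ, Fintype.card_fin,
            nsmul_eq_mul]
  have h2N : (0:ℝ) < 2 * N := by positivity
  rw [latticeLap, hfin]
  rw [abs_of_nonneg (mul_nonneg (inv_nonneg.mpr h2N.le) hS0)]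
  calc (2 * (N:ℝ))⁻¹ * S ≤ (2 * (N:ℝ))⁻¹ * (N * (2 / s)) := by
        exact mul_le_mul_of_nonneg_left hSle (inv_nonneg.mpr h2N.le)
    _ = 1 / s := by
        have hNne : (N:ℝ) ≠ 0 := Nat.cast_ne_zero.mpr hN.ne'
        field_simp
end

section
/- Let (V, ω, μ) be an infinite weighted graph satisfying: ∑_{y∼x} ω(x,y) ≤ C μ(x) for all x; a pseudo metric d with finite jump size j and finite balls; and |Δd(·,x₀)(x)| ≤ C/d(x,x₀)^α for x outside B_{R₀}(x₀), some α ∈ [0,1]. Let ψ ∈ C²([−j,∞)) be positive nonincreasing with ψ ≡ 1 on [−j,1] and ψ(r) = e^{−δr} for r ≥ 2 (δ > 0), and define φ_R(x) = ψ((d(x,x₀)−j)/R). Then for R ≥ max{R₀, 2j} there exists C' > 0 such that |Δφ_R(x)| ≤ (C'/R^{1+α}) e^{−δ d(x,x₀)/R} for all x ∉ B_R(x₀), and Δφ_R(x) = 0 for all x ∈ B_R(x₀). -/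
open scoped BigOperators

lemma mvt2 (f f' f'' : ℝ → ℝ) (l u K p q : ℝ)
    (hd : ∀ z ∈ Set.Icc l u, HasDerivWithinAt f (f' z) (Set.Icc l u) z)
    (hd2 : ∀ z ∈ Set.Icc l u, HasDerivWithinAt f' (f'' z) (Set.Icc l u) z)
    (hK : ∀ z ∈ Set.Icc l u, |f'' z| ≤ K)
    (hp : p ∈ Set.Icc l u) (hq : q ∈ Set.Icc l u) :
    |f q - f p - f' p * (q - p)| ≤ K * (u - l) * |q - p| := by
  have hK0 : 0 ≤ K := le_trans (abs_nonneg _) (hK p hp)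
  have h1 : ∀ t ∈ Set.Icc l u, ‖f' t - f' p‖ ≤ K * (u - l) := by
    intro t ht
    have hb := (convex_Icc l u).norm_image_sub_le_of_norm_hasDerivWithin_le hd2
      (fun z hz => by rw [Real.norm_eq_abs]; exact hK z hz) hp ht
    have h2 : ‖t - p‖ ≤ u - l := by
      rw [Real.norm_eq_abs, abs_le]
      exact ⟨by linarith [ht.1, ht.2, hp.1, hp.2], by linarith [ht.1, ht.2, hp.1, hp.2]⟩
    exact le_trans hb (mul_le_mul_of_nonneg_left h2 hK0)
  have hg : ∀ z ∈ Set.Icc l u,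
      HasDerivWithinAt (fun t => f t - f' p * t) (f' z - f' p) (Set.Icc l u) z := by
    intro z hz
    have hid : HasDerivWithinAt (fun t : ℝ => f' p * t) (f' p) (Set.Icc l u) z := by
      simpa using (hasDerivWithinAt_id z (Set.Icc l u)).const_mul (f' p)
    exact (hd z hz).sub hid
  have h2 := (convex_Icc l u).norm_image_sub_le_of_norm_hasDerivWithin_le hg h1 hp hq
  rw [Real.norm_eq_abs, Real.norm_eq_abs] at h2
  have e : |f q - f p - f' p * (q - p)| = |f q - f' p * q - (f p - f' p * p)| := by
    congr 1; ring
  rw [e]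
  exact h2


set_option maxHeartbeats 4000000 in
/-- Laplacian estimate for the non-compactly supported cut-off
`φ_R(x) = ψ((d(x,x₀)-j)/R)`: it vanishes on `B_R(x₀)` and decays like
`R^{-(1+α)} e^{-δ d(x,x₀)/R}` outside. -/
theorem lap_cutoff_estimate {V : Type*} [Infinite V]
    (μ : V → ℝ) (ω : V → V → ℝ) (d : V → V → ℝ)
    (hμ : ∀ x, 0 < μ x)
    (hω_symm : ∀ x y, ω x y = ω y x)
    (hω_diag : ∀ x, ω x x = 0)
    (hω_nonneg : ∀ x y, 0 ≤ ω x y)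
    (hloc : ∀ x, {y | ω x y ≠ 0}.Finite)
    (C : ℝ) (hC : 0 < C)
    (hdeg : ∀ x, ∑ᶠ y, ω x y ≤ C * μ x)
    (hd_symm : ∀ x y, d x y = d y x)
    (hd_diag : ∀ x, d x x = 0)
    (hd_nonneg : ∀ x y, 0 ≤ d x y)
    (hd_tri : ∀ x y z, d x y ≤ d x z + d z y)
    (j : ℝ) (hj : 0 < j)
    (hjump : ∀ x y, 0 < ω x y → d x y ≤ j)
    (hballs : ∀ (x : V) (r : ℝ), {y | d y x ≤ r}.Finite)
    (α : ℝ) (hα : α ∈ Set.Icc (0:ℝ) 1)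
    (x₀ : V) (R₀ : ℝ) (hR₀ : 1 < R₀)
    (hlapd : ∀ x, R₀ < d x x₀ → |lap μ ω (fun y => d y x₀) x| ≤ C / d x x₀ ^ α)
    (δ : ℝ) (hδ : 0 < δ)
    (ψ : ℝ → ℝ)
    (hψ_smooth : ContDiffOn ℝ 2 ψ (Set.Ici (-j)))
    (hψ_pos : ∀ r, -j ≤ r → 0 < ψ r)
    (hψ_mono : AntitoneOn ψ (Set.Ici (-j)))
    (hψ_one : ∀ r, -j ≤ r → r ≤ 1 → ψ r = 1)
    (hψ_exp : ∀ r, 2 ≤ r → ψ r = Real.exp (-δ * r)) :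
    ∃ C' > 0, ∀ R, max R₀ (2 * j) ≤ R →
      (∀ x, R < d x x₀ →
        |lap μ ω (fun y => ψ ((d y x₀ - j) / R)) x|
          ≤ C' / R ^ (1 + α) * Real.exp (-δ * d x x₀ / R)) ∧
      (∀ x, d x x₀ ≤ R → lap μ ω (fun y => ψ ((d y x₀ - j) / R)) x = 0) := by
  obtain ⟨hα0, hα1⟩ := hα
  have husd : UniqueDiffOn ℝ (Set.Ici (-j)) := uniqueDiffOn_Ici _
  set ψ' : ℝ → ℝ := derivWithin ψ (Set.Ici (-j)) with hψ'def
  set ψ'' : ℝ → ℝ := derivWithin ψ' (Set.Ici (-j)) with hψ''def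
  have hd1 : ContDiffOn ℝ 1 ψ' (Set.Ici (-j)) := hψ_smooth.derivWithin husd (by norm_num)
  have hψ'deriv : ∀ t, -j ≤ t → HasDerivWithinAt ψ (ψ' t) (Set.Ici (-j)) t :=
    fun t ht => ((hψ_smooth.differentiableOn (by norm_num)) t ht).hasDerivWithinAt
  have hψ''deriv : ∀ t, -j ≤ t → HasDerivWithinAt ψ' (ψ'' t) (Set.Ici (-j)) t :=
    fun t ht => ((hd1.differentiableOn (by norm_num)) t ht).hasDerivWithinAt
  have hcont' : ContinuousOn ψ' (Set.Ici (-j)) := hd1.continuousOn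
  have hcont'' : ContinuousOn ψ'' (Set.Ici (-j)) := hd1.continuousOn_derivWithin husd le_rfl
  have hψ'eq : ∀ t, 2 < t → ψ' t = -δ * Real.exp (-δ * t) := by
    intro t ht
    have hmem : Set.Ici (-j) ∈ nhds t := Ici_mem_nhds (by linarith)
    have hev : ψ =ᶠ[nhds t] fun r => Real.exp (-δ * r) := by
      filter_upwards [Ioi_mem_nhds ht] with r hr
      exact hψ_exp r hr.le
    have hda : HasDerivAt (fun r => Real.exp (-δ * r)) (Real.exp (-δ * t) * (-δ)) t := by
      have h0 : HasDerivAt (fun r => -δ * r) (-δ) t := by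
        simpa using (hasDerivAt_id t).const_mul (-δ)
      simpa using h0.exp
    rw [hψ'def, derivWithin_of_mem_nhds hmem, hev.deriv_eq, hda.deriv]; ring
  have hψ''eq : ∀ t, 2 < t → ψ'' t = δ^2 * Real.exp (-δ * t) := by
    intro t ht
    have hmem : Set.Ici (-j) ∈ nhds t := Ici_mem_nhds (by linarith)
    have hev : ψ' =ᶠ[nhds t] fun r => -δ * Real.exp (-δ * r) := by
      filter_upwards [Ioi_mem_nhds ht] with r hr
      exact hψ'eq r hr
    have hda : HasDerivAt (fun r => -δ * Real.exp (-δ * r)) (-δ * (Real.exp (-δ * t) * (-δ))) t := by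
      have h0 : HasDerivAt (fun r => -δ * r) (-δ) t := by
        simpa using (hasDerivAt_id t).const_mul (-δ)
      exact h0.exp.const_mul (-δ)
    rw [hψ''def, derivWithin_of_mem_nhds hmem, hev.deriv_eq, hda.deriv]; ring
  obtain ⟨M1, hM1⟩ := (isCompact_Icc (a := -j) (b := 3)).exists_bound_of_continuousOn
    (hcont'.mono (fun t ht => ht.1))
  obtain ⟨M2, hM2⟩ := (isCompact_Icc (a := -j) (b := 3)).exists_bound_of_continuousOn
    (hcont''.mono (fun t ht => ht.1))
  set M := max 0 (max M1 M2) with hM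
  set A := max (M * Real.exp (3*δ)) (δ^2 + δ) with hA
  have hM0 : (0:ℝ) ≤ M := le_max_left _ _
  have hApos : 0 < A := lt_of_lt_of_le (by positivity) (le_max_right _ _)
  have hbound : ∀ t, -j ≤ t → |ψ' t| ≤ A * Real.exp (-δ * t) ∧ |ψ'' t| ≤ A * Real.exp (-δ * t) := by
    intro t ht
    by_cases h3 : t ≤ 3
    · have hmem : t ∈ Set.Icc (-j) 3 := ⟨ht, h3⟩
      have h1 : |ψ' t| ≤ M := by
        have := hM1 t hmem
        rw [Real.norm_eq_abs] at this
        exact le_trans this (le_trans (le_max_left M1 M2) (le_max_right 0 _))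
      have h2 : |ψ'' t| ≤ M := by
        have := hM2 t hmem
        rw [Real.norm_eq_abs] at this
        exact le_trans this (le_trans (le_max_right M1 M2) (le_max_right 0 _))
      have hMb : M ≤ A * Real.exp (-δ * t) := by
        have e1 : Real.exp (-δ * t) * Real.exp (3 * δ) = Real.exp (-δ*t + 3*δ) :=
          (Real.exp_add _ _).symm
        have e2 : (1:ℝ) ≤ Real.exp (-δ*t + 3*δ) := by
          rw [← Real.exp_zero]
          exact Real.exp_le_exp.2 (by nlinarith)
        have e3 : M * Real.exp (3*δ) ≤ A := le_max_left _ _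
        have e4 : 0 < Real.exp (-δ * t) := Real.exp_pos _
        nlinarith [Real.exp_pos (3*δ)]
      exact ⟨h1.trans hMb, h2.trans hMb⟩
    · push_neg at h3
      have h2t : 2 < t := by linarith
      have eA : δ^2 + δ ≤ A := le_max_right _ _
      have e4 : 0 < Real.exp (-δ * t) := Real.exp_pos _
      constructor
      · rw [hψ'eq t h2t, abs_mul, abs_neg, abs_of_pos hδ, abs_of_pos e4]
        nlinarith [sq_nonneg δ]
      · rw [hψ''eq t h2t, abs_mul, abs_of_nonneg (sq_nonneg δ), abs_of_pos e4]
        nlinarith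
  refine ⟨A * Real.exp δ * C * (1 + 2 * j^2), by positivity, ?_⟩
  intro R hR
  have hRR₀ : R₀ ≤ R := le_trans (le_max_left _ _) hR
  have hRj : 2 * j ≤ R := le_trans (le_max_right _ _) hR
  have hR1 : 1 < R := lt_of_lt_of_le hR₀ hRR₀
  have hRpos : 0 < R := by linarith
  have hsupp : ∀ (x : V) (f : V → ℝ), (∀ y, ω x y = 0 → f y = 0) →
      ∑ᶠ y, f y = ∑ y ∈ (hloc x).toFinset, f y := by
    intro x f hf
    apply finsum_eq_finset_sum_of_support_subset
    intro y hy
    rw [Set.Finite.coe_toFinset]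
    intro h0
    exact hy (hf y (by simpa using h0))
  constructor
  · -- main estimate
    intro x hx
    have hRne : R ≠ 0 := ne_of_gt hRpos
    obtain ⟨D, hD⟩ : ∃ D, D = d x x₀ := ⟨_, rfl⟩
    rw [← hD] at hx ⊢
    obtain ⟨a, ha⟩ : ∃ a, a = (D - j)/R := ⟨_, rfl⟩
    obtain ⟨h, hh⟩ : ∃ h, h = j/R := ⟨_, rfl⟩
    obtain ⟨E, hE⟩ : ∃ E, E = Real.exp (-δ * D / R) := ⟨_, rfl⟩
    rw [← hE]
    obtain ⟨φ, hφ⟩ : ∃ φ : V → ℝ, φ = fun y => ψ ((d y x₀ - j) / R) := ⟨_, rfl⟩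
    rw [← hφ]
    obtain ⟨r, hr⟩ : ∃ r : V → ℝ,
        r = fun y => φ y - ψ a - ψ' a * ((d y x₀ - j)/R - a) := ⟨_, rfl⟩
    obtain ⟨K, hK⟩ : ∃ K, K = A * Real.exp δ * E := ⟨_, rfl⟩
    have hdx0 : 0 < D := lt_trans hRpos hx
    have hEpos : 0 < E := by rw [hE]; positivity
    have hKpos : 0 < K := by rw [hK]; positivity
    have hhpos : 0 < h := by rw [hh]; positivity
    have hh2 : h ≤ 1/2 := by rw [hh, div_le_iff₀ hRpos]; linarith
    have hal : 0 ≤ a - h := by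
      rw [ha, hh, div_sub_div_same]
      apply div_nonneg _ hRpos.le
      linarith
    have haj : -j ≤ a := by linarith
    have hIsub : Set.Icc (a - h) (a + h) ⊆ Set.Ici (-j) := by
      intro t ht
      have := ht.1
      simp only [Set.mem_Ici]
      linarith
    have hKbound : ∀ t ∈ Set.Icc (a - h) (a + h), |ψ'' t| ≤ K := by
      intro t ht
      have htj : -j ≤ t := hIsub ht
      refine le_trans (hbound t htj).2 ?_
      rw [hK, hE, mul_assoc, ← Real.exp_add]
      apply mul_le_mul_of_nonneg_left _ hApos.le
      apply Real.exp_le_exp.2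
      have h1 : a - h ≤ t := ht.1
      have h2 : -δ * t ≤ -δ * (a - h) := by nlinarith
      have h3 : -δ * (a - h) ≤ δ + -δ * D / R := by
        rw [ha, hh]
        have e : -δ * ((D - j)/R - j/R) = -δ * D / R + δ * ((2*j)/R) := by
          field_simp
          ring
        rw [e]
        have : (2*j)/R ≤ 1 := by rw [div_le_one hRpos]; linarith
        nlinarith
      linarith
    have hterm : ∀ y, ω x y * (φ y - φ x) =
        ψ' a / R * (ω x y * (d y x₀ - D)) + ω x y * r y := by
      intro y
      simp only [hφ, hr, ha, hD]
      have e1 : (d y x₀ - j) / R - (d x x₀ - j)/R = (d y x₀ - d x x₀) / R := by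
        rw [div_sub_div_same]
        congr 1
        ring
      rw [e1]
      ring
    have hlap1 : lap μ ω φ x = ψ' a / R * lap μ ω (fun y => d y x₀) x
        + (μ x)⁻¹ * ∑ y ∈ (hloc x).toFinset, ω x y * r y := by
      rw [lap, lap]
      rw [hsupp x _ (fun y hy => by rw [hy]; ring),
          hsupp x _ (fun y hy => by rw [hy]; ring)]
      rw [← hD, Finset.sum_congr rfl (fun y _ => hterm y), Finset.sum_add_distrib,
          ← Finset.mul_sum]
      ring
    have hry : ∀ y ∈ (hloc x).toFinset, |r y| ≤ K * (2*h) * h := by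
      intro y hy
      have hωy : ω x y ≠ 0 := ((hloc x).mem_toFinset).mp hy
      have hωpos : 0 < ω x y := lt_of_le_of_ne (hω_nonneg x y) (Ne.symm hωy)
      have hdiff : |d y x₀ - D| ≤ j := by
        have h1 := hd_tri y x₀ x
        have h2 := hd_tri x x₀ y
        have h3 := hjump x y hωpos
        have h4 := hd_symm x y
        have h5 := hd_symm y x
        rw [hD, abs_le]
        constructor <;> linarith
      have hb : (d y x₀ - j)/R ∈ Set.Icc (a - h) (a + h) := by
        have e : (d y x₀ - j)/R - a = (d y x₀ - D)/R := by
          rw [ha, div_sub_div_same]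
          congr 1
          ring
        have h1 : |(d y x₀ - j)/R - a| ≤ h := by
          rw [e, hh, abs_div, abs_of_pos hRpos]
          gcongr
        rw [abs_le] at h1
        constructor <;> linarith [h1.1, h1.2]
      have haI : a ∈ Set.Icc (a-h) (a+h) := ⟨by linarith, by linarith⟩
      have hders : ∀ z ∈ Set.Icc (a-h) (a+h),
          HasDerivWithinAt ψ (ψ' z) (Set.Icc (a-h) (a+h)) z :=
        fun z hz => (hψ'deriv z (hIsub hz)).mono hIsub
      have hders2 : ∀ z ∈ Set.Icc (a-h) (a+h),
          HasDerivWithinAt ψ' (ψ'' z) (Set.Icc (a-h) (a+h)) z :=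
        fun z hz => (hψ''deriv z (hIsub hz)).mono hIsub
      have hm := mvt2 ψ ψ' ψ'' (a-h) (a+h) K a ((d y x₀ - j)/R) hders hders2 hKbound haI hb
      have e2 : a + h - (a - h) = 2 * h := by ring
      rw [e2] at hm
      have h1 : |(d y x₀ - j)/R - a| ≤ h := by
        have h2 := hb.1
        have h3 := hb.2
        rw [abs_le]
        constructor <;> linarith
      have e3 : |r y| = |ψ ((d y x₀ - j)/R) - ψ a - ψ' a * ((d y x₀ - j)/R - a)| := by
        rw [hr, hφ]
      rw [e3]
      calc |ψ ((d y x₀ - j)/R) - ψ a - ψ' a * ((d y x₀ - j)/R - a)|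
          ≤ K * (2*h) * |(d y x₀ - j)/R - a| := hm
        _ ≤ K * (2*h) * h := by
            have h9 : (0:ℝ) ≤ K * (2*h) := by positivity
            nlinarith [mul_le_mul_of_nonneg_left h1 h9]
    have hsum_r : |(μ x)⁻¹ * ∑ y ∈ (hloc x).toFinset, ω x y * r y| ≤ C * (K * (2*h) * h) := by
      have hμx := hμ x
      rw [abs_mul, abs_of_pos (inv_pos.2 hμx)]
      have h1 : |∑ y ∈ (hloc x).toFinset, ω x y * r y|
          ≤ (∑ y ∈ (hloc x).toFinset, ω x y) * (K*(2*h)*h) := by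
        rw [Finset.sum_mul]
        refine le_trans (Finset.abs_sum_le_sum_abs _ _) (Finset.sum_le_sum ?_)
        intro y hy
        rw [abs_mul, abs_of_nonneg (hω_nonneg x y)]
        exact mul_le_mul_of_nonneg_left (hry y hy) (hω_nonneg x y)
      have h2 : ∑ y ∈ (hloc x).toFinset, ω x y ≤ C * μ x := by
        rw [← hsupp x (fun y => ω x y) (fun y hy => hy)]
        exact hdeg x
      have hKh : (0:ℝ) ≤ K*(2*h)*h := by positivity
      have h3 : (∑ y ∈ (hloc x).toFinset, ω x y) * (K*(2*h)*h) ≤ (C * μ x) * (K*(2*h)*h) :=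
        mul_le_mul_of_nonneg_right h2 hKh
      calc (μ x)⁻¹ * |∑ y ∈ (hloc x).toFinset, ω x y * r y|
          ≤ (μ x)⁻¹ * ((C * μ x) * (K*(2*h)*h)) := by
            apply mul_le_mul_of_nonneg_left _ (inv_pos.2 hμx).le
            exact le_trans h1 h3
        _ = C * (K*(2*h)*h) := by field_simp
    have hlapdx : |lap μ ω (fun y => d y x₀) x| ≤ C / D ^ α := by
      rw [hD]
      exact hlapd x (by rw [← hD]; exact lt_of_le_of_lt hRR₀ hx)
    have hψ'a : |ψ' a| ≤ A * Real.exp δ * E := by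
      refine le_trans (hbound a haj).1 ?_
      rw [hE, mul_assoc, ← Real.exp_add]
      apply mul_le_mul_of_nonneg_left _ hApos.le
      apply Real.exp_le_exp.2
      rw [ha]
      have e : -δ * ((D - j)/R) = -δ * D / R + δ * (j/R) := by
        field_simp
        ring
      rw [e]
      have h1 : j/R ≤ 1 := by rw [div_le_one hRpos]; linarith
      nlinarith
    have hmain : |lap μ ω φ x| ≤ |ψ' a| / R * (C / D^α) + C * (K * (2*h) * h) := by
      rw [hlap1]
      refine le_trans (abs_add_le _ _) ?_
      have e1 : |ψ' a / R * lap μ ω (fun y => d y x₀) x|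
          = |ψ' a| / R * |lap μ ω (fun y => d y x₀) x| := by
        rw [abs_mul, abs_div, abs_of_pos hRpos]
      rw [e1]
      have h1 : |ψ' a| / R * |lap μ ω (fun y => d y x₀) x| ≤ |ψ' a| / R * (C / D^α) := by
        apply mul_le_mul_of_nonneg_left hlapdx
        positivity
      linarith [hsum_r]
    -- final numeric estimate
    have hR1α : R ^ ((1:ℝ) + α) = R * R ^ α := by
      rw [Real.rpow_add hRpos, Real.rpow_one]
    have hRαpos : 0 < R ^ α := Real.rpow_pos_of_pos hRpos α
    have hDαpos : 0 < D ^ α := Real.rpow_pos_of_pos hdx0 α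
    have hDα : R ^ α ≤ D ^ α := Real.rpow_le_rpow hRpos.le hx.le hα0
    have hR2 : R ^ ((1:ℝ) + α) ≤ R ^ 2 := by
      calc R ^ ((1:ℝ)+α) ≤ R ^ (2:ℝ) :=
            Real.rpow_le_rpow_of_exponent_le hR1.le (by linarith)
        _ = R ^ 2 := by
            rw [show ((2:ℝ)) = ((2:ℕ):ℝ) by norm_num, Real.rpow_natCast]
    have hR1αpos : 0 < R ^ ((1:ℝ)+α) := Real.rpow_pos_of_pos hRpos _
    have t1 : |ψ' a| / R * (C / D^α) ≤ A * Real.exp δ * C / R^((1:ℝ)+α) * E := by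
      have e1 : A * Real.exp δ * C / R^((1:ℝ)+α) * E = (A * Real.exp δ * E)/R * (C/R^α) := by
        rw [hR1α]
        field_simp
      rw [e1]
      have h1 : |ψ' a| / R ≤ (A * Real.exp δ * E)/R := by gcongr
      have h2 : C / D^α ≤ C / R^α := div_le_div_of_nonneg_left hC.le hRαpos hDα
      exact mul_le_mul h1 h2 (by positivity) (by positivity)
    have t2 : C * (K * (2*h) * h) ≤ 2 * (A * Real.exp δ * C) * j^2 / R^((1:ℝ)+α) * E := by
      have e0 : C * (K * (2*h) * h) = 2 * (A * Real.exp δ * C) * j^2 / R^2 * E := by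
        rw [hK, hh]
        field_simp
      rw [e0]
      have h1 : 2 * (A * Real.exp δ * C) * j^2 / R^2
          ≤ 2 * (A * Real.exp δ * C) * j^2 / R^((1:ℝ)+α) :=
        div_le_div_of_nonneg_left (by positivity) hR1αpos hR2
      exact mul_le_mul_of_nonneg_right h1 hEpos.le
    have efin : A * Real.exp δ * C * (1 + 2*j^2) / R^((1:ℝ)+α) * E
        = A * Real.exp δ * C / R^((1:ℝ)+α) * E
          + 2 * (A * Real.exp δ * C) * j^2 / R^((1:ℝ)+α) * E := by
      field_simp
    calc |lap μ ω φ x| ≤ |ψ' a| / R * (C / D^α) + C * (K * (2*h) * h) := hmain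
      _ ≤ A * Real.exp δ * C / R^((1:ℝ)+α) * E
          + 2 * (A * Real.exp δ * C) * j^2 / R^((1:ℝ)+α) * E := by linarith
      _ = A * Real.exp δ * C * (1 + 2*j^2) / R^((1:ℝ)+α) * E := efin.symm
  · -- zero on the ball
    intro x hx
    have hz : ∀ y, ω x y * (ψ ((d y x₀ - j) / R) - ψ ((d x x₀ - j) / R)) = 0 := by
      intro y
      by_cases hωy : ω x y = 0
      · rw [hωy]; ring
      · have hωpos : 0 < ω x y := lt_of_le_of_ne (hω_nonneg x y) (Ne.symm hωy)
        have hdy : d y x₀ ≤ d x x₀ + j := by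
          have h1 := hd_tri y x₀ x
          have h3 := hjump x y hωpos
          have h5 := hd_symm y x
          linarith
        have key : ∀ z : V, d z x₀ ≤ R + j → ψ ((d z x₀ - j)/R) = 1 := by
          intro z hzz
          apply hψ_one
          · rw [le_div_iff₀ hRpos]  -- goal: -j ≤ (d z x₀ - j)/R
            nlinarith [hd_nonneg z x₀]
          · rw [div_le_one hRpos]; linarith
        rw [key y (by linarith), key x (by linarith)]
        ring
    rw [lap]
    rw [finsum_eq_zero_of_forall_eq_zero hz, mul_zero]
end
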